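/- Let λ ∈ ℂ with λ ≠ 0 and λ ≠ 1, and let r ≥ 1 be an integer. Then B_m^{(r)}(λ) = 0 for every integer 0 ≤ m < r, and for every integer n ≥ 0, B_{n+r}^{(r)}(λ) = ((n + r)!/n!)·(λ − 1)^{−r}·H_n^{(r)}(λ⁻¹). -/

import Mathlib

/-!
Since `λ e^t - 1 = λ (e^t - λ⁻¹)` and `λ (1 - λ⁻¹) = λ - 1`, multiplying the defining identity of
the Frobenius–Euler numbers by `λ^r` and by the λ-Bernoulli series gives
`(λ - 1)^r · ∑ B_n t^n/n! = t^r · ∑ H_n t^n/n!`; comparing coefficients of `t^m` proves both claims.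
-/

open PowerSeries

namespace PowerSeries

variable {K : Type*} [Field K]

def egf (a : ℕ → K) : K⟦X⟧ :=
  mk fun n => a n / n.factorial

theorem coeff_egf (a : ℕ → K) (n : ℕ) : coeff n (egf a) = a n / n.factorial :=
  coeff_mk _ _

variable [CharZero K] {u : K} {r : ℕ} {a b : ℕ → K}

theorem apply_eq_zero_of_C_mul_egf_eq_X_pow_mul_egf (hu : u ≠ 0)
    (h : C u * egf a = X ^ r * egf b) {m : ℕ} (hm : m < r) : a m = 0 := by
  have hcoeff := congrArg (coeff m) h
  rw [coeff_C_mul, coeff_egf, coeff_X_pow_mul', if_neg (by omega), mul_div_assoc'] at hcoeff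
  simpa [hu, Nat.factorial_ne_zero] using hcoeff

theorem apply_add_eq_of_C_mul_egf_eq_X_pow_mul_egf (hu : u ≠ 0)
    (h : C u * egf a = X ^ r * egf b) (n : ℕ) :
    a (n + r) = (n + r).factorial / n.factorial * u⁻¹ * b n := by
  have hn := congrArg (coeff (n + r)) h
  rw [coeff_C_mul, coeff_X_pow_mul, coeff_egf, coeff_egf] at hn
  have : ((n + r).factorial : K) ≠ 0 := Nat.cast_ne_zero.mpr (Nat.factorial_ne_zero _)
  have : (n.factorial : K) ≠ 0 := Nat.cast_ne_zero.mpr (Nat.factorial_ne_zero _)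
  field_simp at hn ⊢
  linear_combination hn

end PowerSeries

theorem mul_pow_mul_eq_pow_mul_of_eq {R : Type*} [CommSemiring R] {x c g d b h : R} {r : ℕ}
    (hb : x ^ r = (c * g) ^ r * b) (hh : d ^ r = g ^ r * h) : (c * d) ^ r * b = x ^ r * h := by
  rw [mul_pow, hh, hb]
  ring

theorem lambdaBernoulli_order_r_eq_frobeniusEuler_order_r_general (lam : ℂ) (h0 : lam ≠ 0)
    (h1 : lam ≠ 1) (r : ℕ) (B H : ℕ → ℂ)
    (hB : (PowerSeries.X : PowerSeries ℂ) ^ r =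
      (PowerSeries.C lam * PowerSeries.exp ℂ - 1) ^ r *
        PowerSeries.mk (fun n => B n / (n.factorial : ℂ)))
    (hH : (PowerSeries.C (1 - lam⁻¹)) ^ r =
      (PowerSeries.exp ℂ - PowerSeries.C lam⁻¹) ^ r *
        PowerSeries.mk (fun n => H n / (n.factorial : ℂ))) :
    (∀ m : ℕ, m < r → B m = 0) ∧
    ∀ n : ℕ, B (n + r) =
      (((n + r).factorial : ℂ) / (n.factorial : ℂ)) * ((lam - 1) ^ r)⁻¹ * H n := by
  have hfactor : C lam * exp ℂ - 1 = C lam * (exp ℂ - C lam⁻¹) := by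
    rw [mul_sub, ← map_mul, mul_inv_cancel₀ h0, map_one]
  have hconst : lam * (1 - lam⁻¹) = lam - 1 := by
    rw [mul_sub, mul_one, mul_inv_cancel₀ h0]
  have key : C ((lam - 1) ^ r) * egf B = X ^ r * egf H := by
    rw [map_pow, ← hconst, map_mul]
    exact mul_pow_mul_eq_pow_mul_of_eq (hfactor ▸ hB) hH
  have hu : (lam - 1) ^ r ≠ 0 := pow_ne_zero _ (sub_ne_zero.mpr h1)
  exact ⟨fun m hm => apply_eq_zero_of_C_mul_egf_eq_X_pow_mul_egf hu key hm,
    apply_add_eq_of_C_mul_egf_eq_X_pow_mul_egf hu key⟩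

/-- let `λ ∈ ℂ`, `λ ≠ 0`, `λ ≠ 1`, and `r ≥ 1`. If `B n = B_n^{(r)}(λ)` are the
λ-Bernoulli numbers of order `r`, defined by the formal power series identity
`t^r = (λ·e^t - 1)^r · ∑_{n≥0} B_n^{(r)}(λ)·t^n/n!`, and `H n = H_n^{(r)}(λ⁻¹)` are the
Frobenius–Euler numbers of order `r` at `u = λ⁻¹`, defined by
`(1 - u)^r = (e^t - u)^r · ∑_{n≥0} H_n^{(r)}(u)·t^n/n!`, then `B_m^{(r)}(λ) = 0` for `m < r`
and `B_{n+r}^{(r)}(λ) = ((n + r)!/n!)·(λ - 1)^{-r}·H_n^{(r)}(λ⁻¹)` for all `n ≥ 0`. -/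
theorem lambdaBernoulli_order_r_eq_frobeniusEuler_order_r (lam : ℂ) (h0 : lam ≠ 0)
    (h1 : lam ≠ 1) (r : ℕ) (hr : 1 ≤ r) (B H : ℕ → ℂ)
    (hB : (PowerSeries.X : PowerSeries ℂ) ^ r =
      (PowerSeries.C lam * PowerSeries.exp ℂ - 1) ^ r *
        PowerSeries.mk (fun n => B n / (n.factorial : ℂ)))
    (hH : (PowerSeries.C (1 - lam⁻¹)) ^ r =
      (PowerSeries.exp ℂ - PowerSeries.C lam⁻¹) ^ r *
        PowerSeries.mk (fun n => H n / (n.factorial : ℂ))) :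
    (∀ m : ℕ, m < r → B m = 0) ∧
    ∀ n : ℕ, B (n + r) =
      (((n + r).factorial : ℂ) / (n.factorial : ℂ)) * ((lam - 1) ^ r)⁻¹ * H n :=
  lambdaBernoulli_order_r_eq_frobeniusEuler_order_r_general lam h0 h1 r B H hB hH
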